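/- arXiv:2004.01627 — 2 statements merged into one kernel-verified Lean document; each statement's English description precedes it below -/
import Mathlib

section
/- At every admissible state q of the 2D Euler equations, the gradient of the entropy function U equals the entropy variables: ∇U(q) = r(q) = ((γ−s)/(γ−1) − β(u²+v²), 2βu, 2βv, −2β), where β := ρ/(2p). -/
open Real Matrix

noncomputable section

/-- A state of the 2D compressible Euler equations: `(ρ, ρu, ρv, E)`. -/
abbrev EulerState := Fin 4 → ℝ

/-- Density. -/
def rho (q : EulerState) : ℝ := q 0
/-- x-momentum. -/
def mom1 (q : EulerState) : ℝ := q 1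
/-- y-momentum. -/
def mom2 (q : EulerState) : ℝ := q 2
/-- Total energy. -/
def toten (q : EulerState) : ℝ := q 3
/-- Pressure `p = (γ-1)(E - (m₁² + m₂²)/(2ρ))`. -/
def pres (γ : ℝ) (q : EulerState) : ℝ :=
  (γ - 1) * (toten q - (mom1 q ^ 2 + mom2 q ^ 2) / (2 * rho q))
/-- x-velocity `u = m₁/ρ`. -/
def uvel (q : EulerState) : ℝ := mom1 q / rho q
/-- y-velocity `v = m₂/ρ`. -/
def vvel (q : EulerState) : ℝ := mom2 q / rho q
/-- Admissible states: positive density and positive pressure. -/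
def admissible (γ : ℝ) (q : EulerState) : Prop := 0 < rho q ∧ 0 < pres γ q
/-- Physical entropy `s = ln(p ρ^(-γ))`. -/
def entS (γ : ℝ) (q : EulerState) : ℝ := Real.log (pres γ q * rho q ^ (-γ))
/-- Entropy function `U = -ρ s/(γ-1)`. -/
def entU (γ : ℝ) (q : EulerState) : ℝ := -(rho q * entS γ q) / (γ - 1)
/-- `β = ρ/(2p)`. -/
def betaCoef (γ : ℝ) (q : EulerState) : ℝ := rho q / (2 * pres γ q)
/-- Entropy variables `r(q)`. -/
def entVar (γ : ℝ) (q : EulerState) : EulerState :=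
  ![(γ - entS γ q) / (γ - 1) - betaCoef γ q * (uvel q ^ 2 + vvel q ^ 2),
    2 * betaCoef γ q * uvel q,
    2 * betaCoef γ q * vvel q,
    -2 * betaCoef γ q]
/-- x-flux `f(q)`. -/
def fFlux (γ : ℝ) (q : EulerState) : EulerState :=
  ![rho q * uvel q,
    rho q * uvel q ^ 2 + pres γ q,
    rho q * uvel q * vvel q,
    (toten q + pres γ q) * uvel q]
/-- y-flux `g(q)`. -/
def gFlux (γ : ℝ) (q : EulerState) : EulerState :=
  ![rho q * vvel q,
    rho q * uvel q * vvel q,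
    rho q * vvel q ^ 2 + pres γ q,
    (toten q + pres γ q) * vvel q]
/-- x-entropy flux `φₓ = -ρ u s/(γ-1)`. -/
def phiX (γ : ℝ) (q : EulerState) : ℝ := -(rho q * uvel q * entS γ q) / (γ - 1)
/-- y-entropy flux `φ_y = -ρ v s/(γ-1)`. -/
def phiY (γ : ℝ) (q : EulerState) : ℝ := -(rho q * vvel q * entS γ q) / (γ - 1)

/-- Logarithmic mean `(b-a)/(ln b - ln a)`, equal to `a` when `a = b`. -/
def logMean (a b : ℝ) : ℝ := if a = b then a else (b - a) / (Real.log b - Real.log a)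

/-- The entropy conservative flux of Chandrashekar. -/
def chandrashekarFlux (γ : ℝ) (qm qp : EulerState) : EulerState :=
  let ρhat := logMean (rho qm) (rho qp)
  let ubar := (uvel qm + uvel qp) / 2
  let vbar := (vvel qm + vvel qp) / 2
  let βbar := (betaCoef γ qm + betaCoef γ qp) / 2
  let βhat := logMean (betaCoef γ qm) (betaCoef γ qp)
  let ρbar := (rho qm + rho qp) / 2
  let ptil := ρbar / (2 * βbar)
  let vsqbar := (uvel qm ^ 2 + vvel qm ^ 2 + uvel qp ^ 2 + vvel qp ^ 2) / 2
  let Fρ := ρhat * ubar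
  let Fρu := ubar * Fρ + ptil
  let Fρv := vbar * Fρ
  ![Fρ, Fρu, Fρv,
    (1 / (2 * (γ - 1) * βhat) - vsqbar / 2) * Fρ + ubar * Fρu + vbar * Fρv]

/-- Speed of sound `c = √(γ p/ρ)`. -/
def cSound (γ : ℝ) (q : EulerState) : ℝ := Real.sqrt (γ * pres γ q / rho q)
/-- Enthalpy `H = c²/(γ-1) + |v|²/2`. -/
def enthalpyH (γ : ℝ) (q : EulerState) : ℝ :=
  cSound γ q ^ 2 / (γ - 1) + (uvel q ^ 2 + vvel q ^ 2) / 2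
/-- The matrix `R` of right eigenvectors of the x-flux Jacobian. -/
def eigMat (γ : ℝ) (q : EulerState) : Matrix (Fin 4) (Fin 4) ℝ :=
  !![1, 1, 0, 1;
     uvel q - cSound γ q, uvel q, 0, uvel q + cSound γ q;
     vvel q, vvel q, -1, vvel q;
     enthalpyH γ q - cSound γ q * uvel q, (uvel q ^ 2 + vvel q ^ 2) / 2, -vvel q,
       enthalpyH γ q + cSound γ q * uvel q]
/-- Barth's scaling matrix `S = diag(ρ/(2γ), (γ-1)ρ/γ, p, ρ/(2γ))`. -/
def scalMat (γ : ℝ) (q : EulerState) : Matrix (Fin 4) (Fin 4) ℝ :=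
  Matrix.diagonal ![rho q / (2 * γ), (γ - 1) * rho q / γ, pres γ q, rho q / (2 * γ)]

/-- Entropy diffusion matrix `Q = R |Λ| S Rᵀ` for a diagonal `|Λ| = diag lam`. -/
def Qmat (γ : ℝ) (lam : Fin 4 → ℝ) (q : EulerState) : Matrix (Fin 4) (Fin 4) ℝ :=
  eigMat γ q * Matrix.diagonal lam * scalMat γ q * (eigMat γ q)ᵀ

/-- Roe eigenvalues `(|u-c|, |u|, |u|, |u+c|)`. -/
def lamRoe (γ : ℝ) (q : EulerState) : Fin 4 → ℝ :=
  ![|uvel q - cSound γ q|, |uvel q|, |uvel q|, |uvel q + cSound γ q|]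
/-- Kinetic energy stable eigenvalues `(|u|+c, |u|, |u|, |u|+c)`. -/
def lamKES (γ : ℝ) (q : EulerState) : Fin 4 → ℝ :=
  ![|uvel q| + cSound γ q, |uvel q|, |uvel q|, |uvel q| + cSound γ q]
/-- Local Mach number `M = |v|/c`. -/
def machNum (γ : ℝ) (q : EulerState) : ℝ :=
  Real.sqrt (uvel q ^ 2 + vvel q ^ 2) / cSound γ q
/-- Rescaled speed of sound `c̃ = c max(min(M,1), M_cut)`. -/
def cTilde (γ Mcut : ℝ) (q : EulerState) : ℝ :=
  cSound γ q * max (min (machNum γ q) 1) Mcut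
/-- Low Mach Roe eigenvalues `(|u-c̃|, |u|, |u|, |u+c̃|)`. -/
def lamRoeLM (γ Mcut : ℝ) (q : EulerState) : Fin 4 → ℝ :=
  ![|uvel q - cTilde γ Mcut q|, |uvel q|, |uvel q|, |uvel q + cTilde γ Mcut q|]
/-- Low Mach KES eigenvalues `(|u|+c̃, |u|, |u|, |u|+c̃)`. -/
def lamKESLM (γ Mcut : ℝ) (q : EulerState) : Fin 4 → ℝ :=
  ![|uvel q| + cTilde γ Mcut q, |uvel q|, |uvel q|, |uvel q| + cTilde γ Mcut q]

/-! With `s = log p - γ log ρ`, the chain rule gives `∇s = ∇p / p - (γ / ρ) e₀`, where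
`∇p = (γ - 1) (|v|² / 2, -u, -v, 1)`. Hence `∇U = -(s e₀ + ρ ∇s) / (γ - 1)
= (γ - s) / (γ - 1) e₀ - (ρ / p) (|v|² / 2, -u, -v, 1)`, which is `r(q)` because `ρ / p = 2β`. -/

section DotCLM

variable {R ι : Type*} [CommSemiring R] [TopologicalSpace R] [IsTopologicalSemiring R] [Fintype ι]

open ContinuousLinearMap in
def dotCLM (c : ι → R) : (ι → R) →L[R] R :=
  ∑ i, c i • proj (R := R) (φ := fun _ : ι => R) i

@[simp]
theorem dotCLM_apply (c w : ι → R) : dotCLM c w = c ⬝ᵥ w := by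
  simp only [dotCLM, _root_.sum_apply, _root_.smul_apply, ContinuousLinearMap.proj_apply,
    smul_eq_mul, dotProduct]

end DotCLM

section Coordinates

variable (q : EulerState)

theorem hasFDerivAt_rho : HasFDerivAt rho (ContinuousLinearMap.proj (R := ℝ) 0) q :=
  hasFDerivAt_apply 0 q

theorem hasFDerivAt_mom1 : HasFDerivAt mom1 (ContinuousLinearMap.proj (R := ℝ) 1) q :=
  hasFDerivAt_apply 1 q

theorem hasFDerivAt_mom2 : HasFDerivAt mom2 (ContinuousLinearMap.proj (R := ℝ) 2) q :=
  hasFDerivAt_apply 2 q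

theorem hasFDerivAt_toten : HasFDerivAt toten (ContinuousLinearMap.proj (R := ℝ) 3) q :=
  hasFDerivAt_apply 3 q

end Coordinates

def presGrad (γ : ℝ) (q : EulerState) : EulerState :=
  (γ - 1) • ![(uvel q ^ 2 + vvel q ^ 2) / 2, -uvel q, -vvel q, 1]

theorem hasFDerivAt_pres (γ : ℝ) {q : EulerState} (hρ : rho q ≠ 0) :
    HasFDerivAt (pres γ) (dotCLM (presGrad γ q)) q := by
  have hinv := (hasDerivAt_inv (mul_ne_zero two_ne_zero hρ)).comp_hasFDerivAt q
    ((hasFDerivAt_rho q).const_mul (2 : ℝ))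
  have hkin := (((hasFDerivAt_mom1 q).pow 2).add ((hasFDerivAt_mom2 q).pow 2)).mul hinv
  have h : HasFDerivAt (pres γ) _ q := ((hasFDerivAt_toten q).sub hkin).const_mul (γ - 1)
  refine h.congr_fderiv ?_
  ext w
  simp only [presGrad, uvel, vvel, dotCLM_apply, dotProduct, Fin.sum_univ_four, Pi.add_apply,
    Pi.smul_apply, _root_.sub_apply, _root_.add_apply, _root_.smul_apply,
    ContinuousLinearMap.proj_apply, Function.comp_apply, smul_eq_mul, cons_val]
  field_simp
  ring

theorem hasFDerivAt_entS (γ : ℝ) {q : EulerState} (hρ : 0 < rho q) (hp : 0 < pres γ q) :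
    HasFDerivAt (entS γ)
      ((pres γ q)⁻¹ • dotCLM (presGrad γ q) - (γ / rho q) • ContinuousLinearMap.proj 0) q := by
  have h := ((hasFDerivAt_pres γ hρ.ne').mul
    ((hasFDerivAt_rho q).rpow_const (p := -γ) (Or.inl hρ.ne'))).log
    (mul_pos hp (Real.rpow_pos_of_pos hρ _)).ne'
  refine h.congr_fderiv ?_
  ext w
  simp only [Real.rpow_sub_one hρ.ne', Pi.mul_apply, dotCLM_apply, _root_.sub_apply,
    _root_.add_apply, _root_.smul_apply, ContinuousLinearMap.proj_apply, smul_eq_mul]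
  field_simp
  ring

/-- at every admissible state the gradient of the entropy function `U`
equals the entropy variables `r(q)`: the derivative of `U` at `q` is the linear map
`w ↦ r(q) ⬝ᵥ w`. -/
theorem gradient_entropy_eq_entropy_variables (γ : ℝ) (hγ : 1 < γ) (q : EulerState)
    (hq : admissible γ q) :
    HasFDerivAt (entU γ)
      (∑ i : Fin 4, entVar γ q i •
        (ContinuousLinearMap.proj (R := ℝ) (φ := fun _ : Fin 4 => ℝ) i)) q := by
  obtain ⟨hρ, hp⟩ := hq
  change HasFDerivAt (entU γ) (dotCLM (entVar γ q)) q
  have hU : HasFDerivAt (entU γ) _ q :=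
    ((hasFDerivAt_rho q).mul (hasFDerivAt_entS γ hρ hp)).neg.mul_const (γ - 1)⁻¹
  refine hU.congr_fderiv ?_
  have hγ1 : γ - 1 ≠ 0 := sub_ne_zero.2 hγ.ne'
  ext w
  simp only [entVar, betaCoef, presGrad, dotCLM_apply, dotProduct, Fin.sum_univ_four,
    Pi.smul_apply, _root_.neg_apply, _root_.sub_apply, _root_.add_apply, _root_.smul_apply,
    ContinuousLinearMap.proj_apply, smul_eq_mul, cons_val]
  field_simp
  ring
end
end

section
/- The ES flux is entropy stable in the sense of Tadmor: for all admissible states q⁻, q⁺ and every admissible intermediate state q_int of the 2D Euler equations, the flux F^ES(q⁻, q⁺) := F*(q⁻, q⁺) − ½ Q(q_int)(r(q⁺) − r(q⁻)) with Q(q_int) := R |Λ|^Roe S Rᵀ evaluated at q_int and |Λ|^Roe := diag(|u−c|, |u|, |u|, |u+c|) satisfies (r(q⁺) − r(q⁻)) · F^ES(q⁻, q⁺) ≤ ρ⁺u⁺ − ρ⁻u⁻. -/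
open Real Matrix

noncomputable section

lemma quad_nonneg (R : Matrix (Fin 4) (Fin 4) ℝ) (e : Fin 4 → ℝ) (he : ∀ i, 0 ≤ e i)
    (z : Fin 4 → ℝ) : 0 ≤ z ⬝ᵥ (R * Matrix.diagonal e * Rᵀ).mulVec z := by
  rw [Matrix.mul_assoc, ← Matrix.mulVec_mulVec, ← Matrix.mulVec_mulVec,
    Matrix.dotProduct_mulVec]
  rw [show z ᵥ* R = Rᵀ.mulVec z from (Matrix.mulVec_transpose R z).symm]
  set w := Rᵀ.mulVec z
  simp only [dotProduct, Matrix.mulVec_diagonal]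
  exact Finset.sum_nonneg fun i _ => by
    have := mul_self_nonneg (w i); nlinarith [he i]

lemma logMean_spec {a b : ℝ} (ha : 0 < a) (hb : 0 < b) :
    b - a = logMean a b * (Real.log b - Real.log a) ∧ logMean a b ≠ 0 := by
  unfold logMean
  by_cases h : a = b
  · subst h; simp [ha.ne']
  · have hlog : Real.log b - Real.log a ≠ 0 := by
      rcases lt_or_gt_of_ne h with h' | h'
      · have := Real.log_lt_log ha h'; linarith
      · have := Real.log_lt_log hb h'; linarith
    rw [if_neg h]
    exact ⟨by field_simp, div_ne_zero (sub_ne_zero.mpr (Ne.symm h)) hlog⟩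

lemma entS_eq (γ : ℝ) (q : EulerState) (h : admissible γ q) :
    entS γ q = -(γ - 1) * Real.log (rho q) - Real.log (betaCoef γ q) - Real.log 2 := by
  obtain ⟨hρ, hp⟩ := h
  have h1 : entS γ q = Real.log (pres γ q) - γ * Real.log (rho q) := by
    unfold entS
    rw [Real.log_mul hp.ne' (by positivity : rho q ^ (-γ) ≠ 0), Real.log_rpow hρ]; ring
  have h2 : Real.log (betaCoef γ q) = Real.log (rho q) - Real.log (pres γ q) - Real.log 2 := by
    unfold betaCoef
    rw [Real.log_div hρ.ne' (by positivity), Real.log_mul two_ne_zero hp.ne']; ring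
  rw [h1, h2]; ring

lemma betaCoef_pos {γ : ℝ} {q : EulerState} (h : admissible γ q) : 0 < betaCoef γ q := by
  unfold betaCoef; exact div_pos h.1 (by linarith [h.2])

lemma chandra_ec (γ : ℝ) (hγ : 1 < γ) (qm qp : EulerState)
    (hm : admissible γ qm) (hp : admissible γ qp) :
    (entVar γ qp - entVar γ qm) ⬝ᵥ chandrashekarFlux γ qm qp
      = rho qp * uvel qp - rho qm * uvel qm := by
  have hγ1 : γ - 1 ≠ 0 := by linarith
  have hβm := betaCoef_pos hm
  have hβp := betaCoef_pos hp
  obtain ⟨hLρ, hLρ0⟩ := logMean_spec hm.1 hp.1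
  obtain ⟨hLβ, hLβ0⟩ := logMean_spec hβm hβp
  have hβs : betaCoef γ qm + betaCoef γ qp ≠ 0 := by positivity
  have e1 : Real.log (rho qp) =
      Real.log (rho qm) + (rho qp - rho qm) / logMean (rho qm) (rho qp) := by
    field_simp; linarith [hLρ]
  have e2 : Real.log (betaCoef γ qp) =
      Real.log (betaCoef γ qm)
        + (betaCoef γ qp - betaCoef γ qm) / logMean (betaCoef γ qm) (betaCoef γ qp) := by
    field_simp; linarith [hLβ]
  simp only [chandrashekarFlux, entVar, dotProduct, Fin.sum_univ_four, Pi.sub_apply,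
    Matrix.cons_val_zero, Matrix.cons_val_one, Matrix.head_cons, Matrix.cons_val_two,
    Matrix.tail_cons, Matrix.cons_val_three]
  rw [entS_eq γ qm hm, entS_eq γ qp hp, e1, e2]
  field_simp
  ring

/-- the ES flux `F^ES = F* − ½ Q(q_int)(r(q⁺) − r(q⁻))` with
`Q = R |Λ|^Roe S Rᵀ`, `|Λ|^Roe = diag(|u−c|,|u|,|u|,|u+c|)`, is entropy stable in the
sense of Tadmor: `(r(q⁺) − r(q⁻)) ⬝ F^ES(q⁻,q⁺) ≤ ρ⁺u⁺ − ρ⁻u⁻`. -/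
theorem es_flux_entropy_stable (γ : ℝ) (hγ : 1 < γ)
    (qm qp qint : EulerState) (hm : admissible γ qm) (hp : admissible γ qp)
    (hint : admissible γ qint) :
    (entVar γ qp - entVar γ qm) ⬝ᵥ
        (chandrashekarFlux γ qm qp
          - (1 / 2 : ℝ) • (Qmat γ (lamRoe γ qint) qint).mulVec (entVar γ qp - entVar γ qm))
      ≤ rho qp * uvel qp - rho qm * uvel qm := by
  set z := entVar γ qp - entVar γ qm with hz
  have hQeq : Qmat γ (lamRoe γ qint) qint
      = eigMat γ qint * Matrix.diagonal
          (lamRoe γ qint * ![rho qint / (2 * γ), (γ - 1) * rho qint / γ, pres γ qint,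
            rho qint / (2 * γ)]) * (eigMat γ qint)ᵀ := by
    unfold Qmat scalMat
    rw [Matrix.mul_assoc (eigMat γ qint), Matrix.diagonal_mul_diagonal]
    rfl
  have he : ∀ i, 0 ≤ (lamRoe γ qint * ![rho qint / (2 * γ), (γ - 1) * rho qint / γ,
      pres γ qint, rho qint / (2 * γ)]) i := by
    obtain ⟨hρ, hpr⟩ := hint
    have hγ0 : (0:ℝ) < γ := by linarith
    have hγ1 : (0:ℝ) < γ - 1 := by linarith
    intro i
    fin_cases i <;> simp [Pi.mul_apply, lamRoe] <;> positivity
  have hQ : 0 ≤ z ⬝ᵥ (Qmat γ (lamRoe γ qint) qint).mulVec z := by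
    rw [hQeq]; exact quad_nonneg _ _ he z
  have hec := chandra_ec γ hγ qm qp hm hp
  rw [dotProduct_sub, dotProduct_smul, ← hz] at *
  rw [hec]
  have : (0:ℝ) ≤ (1 / 2 : ℝ) • (z ⬝ᵥ (Qmat γ (lamRoe γ qint) qint).mulVec z) := by
    simp only [smul_eq_mul]; linarith
  linarith [this]
end
end
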